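/- arXiv:0909.0050 — 2 statements merged into one kernel-verified Lean document; each statement's English description precedes it below -/
import Mathlib

section
/- If t > d, then the convolution of the polynomial weight w_{-t}(x) = (1+|x|)^{-t} with itself is pointwise bounded by K·w_{-t}, i.e. there exists a constant K > 0 (depending only on t and d) such that ∫_{ℝ^d} (1+|y|)^{-t}(1+|x-y|)^{-t} dy ≤ K (1+|x|)^{-t} for all x ∈ ℝ^d. -/
/-!
Since `‖x‖ ≤ ‖y‖ + ‖x - y‖`, the larger of `‖y‖` and `‖x - y‖` is at least `‖x‖ / 2`, so the
corresponding factor of the integrand is at most `2 ^ t (1 + ‖x‖) ^ (-t)`. Bounding the other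
factor by the sum of both gives the integrand a majorant `2 ^ t (1 + ‖x‖) ^ (-t)` times the sum of
two translates of `(1 + ‖·‖) ^ (-t)`, which is integrable exactly when `t > d`.
-/

open MeasureTheory Module

lemma one_add_rpow_neg_le_two_rpow_mul {a b t : ℝ} (hb : 0 ≤ b) (hba : b ≤ 2 * a) (ht : 0 ≤ t) :
    (1 + a) ^ (-t) ≤ 2 ^ t * (1 + b) ^ (-t) := by
  calc (1 + a) ^ (-t) ≤ ((1 + b) / 2) ^ (-t) :=
        Real.rpow_le_rpow_of_nonpos (by positivity) (by linarith) (by linarith)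
    _ = 2 ^ t * (1 + b) ^ (-t) := by
        rw [Real.div_rpow (by positivity) zero_le_two, Real.rpow_neg zero_le_two, div_inv_eq_mul,
          mul_comm]

section NormedGroup

variable {E : Type*} [NormedAddCommGroup E]

lemma one_add_norm_rpow_neg_mul_le {t : ℝ} (ht : 0 ≤ t) (x y : E) :
    (1 + ‖y‖) ^ (-t) * (1 + ‖x - y‖) ^ (-t) ≤
      2 ^ t * (1 + ‖x‖) ^ (-t) * ((1 + ‖y‖) ^ (-t) + (1 + ‖x - y‖) ^ (-t)) := by
  wlog hy : ‖y‖ ≤ ‖x - y‖ generalizing y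
  · have := this (x - y) (by rw [sub_sub_cancel]; exact le_of_not_ge hy)
    rwa [sub_sub_cancel, mul_comm ((1 + ‖x - y‖) ^ (-t)), add_comm ((1 + ‖x - y‖) ^ (-t))] at this
  have hx : ‖x‖ ≤ 2 * ‖x - y‖ := by
    linarith [norm_le_norm_add_norm_sub' x y]
  calc (1 + ‖y‖) ^ (-t) * (1 + ‖x - y‖) ^ (-t)
      ≤ (1 + ‖y‖) ^ (-t) * (2 ^ t * (1 + ‖x‖) ^ (-t)) := by
        gcongr
        exact one_add_rpow_neg_le_two_rpow_mul (norm_nonneg x) hx ht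
    _ ≤ 2 ^ t * (1 + ‖x‖) ^ (-t) * ((1 + ‖y‖) ^ (-t) + (1 + ‖x - y‖) ^ (-t)) := by
        rw [mul_comm]
        gcongr
        exact le_add_of_nonneg_right (by positivity)

end NormedGroup

section FiniteDimensional

variable {E : Type*} [NormedAddCommGroup E] [NormedSpace ℝ E] [FiniteDimensional ℝ E]
  [MeasurableSpace E] [BorelSpace E] (μ : Measure E) [μ.IsAddHaarMeasure]

lemma integral_one_add_norm_rpow_neg_pos {t : ℝ} (ht : (finrank ℝ E : ℝ) < t) :
    0 < ∫ y, (1 + ‖y‖) ^ (-t) ∂μ := by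
  rw [integral_pos_iff_support_of_nonneg (fun y ↦ by positivity) (integrable_one_add_norm ht)]
  have : Function.support (fun y : E ↦ (1 + ‖y‖) ^ (-t)) = Set.univ :=
    Set.eq_univ_of_forall fun y ↦ Function.mem_support.mpr (by positivity)
  simp [this, NeZero.ne μ]

theorem integral_one_add_norm_rpow_neg_mul_sub_le {t : ℝ} (ht : (finrank ℝ E : ℝ) < t) (x : E) :
    ∫ y, (1 + ‖y‖) ^ (-t) * (1 + ‖x - y‖) ^ (-t) ∂μ ≤
      2 ^ t * (2 * ∫ y, (1 + ‖y‖) ^ (-t) ∂μ) * (1 + ‖x‖) ^ (-t) := by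
  have hint : Integrable (fun y : E ↦ (1 + ‖y‖) ^ (-t)) μ := integrable_one_add_norm ht
  have hint_sub : Integrable (fun y : E ↦ (1 + ‖x - y‖) ^ (-t)) μ := hint.comp_sub_left x
  calc ∫ y, (1 + ‖y‖) ^ (-t) * (1 + ‖x - y‖) ^ (-t) ∂μ
      ≤ ∫ y, 2 ^ t * (1 + ‖x‖) ^ (-t) * ((1 + ‖y‖) ^ (-t) + (1 + ‖x - y‖) ^ (-t)) ∂μ :=
        integral_mono_of_nonneg (.of_forall fun y ↦ by positivity)
          ((hint.add hint_sub).const_mul _)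
          (.of_forall (one_add_norm_rpow_neg_mul_le ((finrank ℝ E).cast_nonneg.trans ht.le) x))
    _ = 2 ^ t * (2 * ∫ y, (1 + ‖y‖) ^ (-t) ∂μ) * (1 + ‖x‖) ^ (-t) := by
        rw [integral_const_mul, integral_add hint hint_sub,
          integral_sub_left_eq_self (fun y ↦ (1 + ‖y‖) ^ (-t)) μ x]
        ring

end FiniteDimensional

/-- Subconvolutivity of polynomial weights: if `t > d` then
`∫ (1+|y|)^{-t} (1+|x-y|)^{-t} dy ≤ K (1+|x|)^{-t}` for a constant `K = K(t,d)`. -/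
theorem polynomial_weight_subconvolutive (d : ℕ) (t : ℝ) (ht : (d : ℝ) < t) :
    ∃ K > (0 : ℝ), ∀ x : EuclideanSpace ℝ (Fin d),
      (∫ y : EuclideanSpace ℝ (Fin d),
          (1 + ‖y‖) ^ (-t) * (1 + ‖x - y‖) ^ (-t))
        ≤ K * (1 + ‖x‖) ^ (-t) := by
  have hdim : (finrank ℝ (EuclideanSpace ℝ (Fin d)) : ℝ) < t := by
    rwa [finrank_euclideanSpace_fin]
  have hpos := integral_one_add_norm_rpow_neg_pos volume hdim
  exact ⟨_, by positivity, integral_one_add_norm_rpow_neg_mul_sub_le volume hdim⟩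
end

section
/- Let Γ ⊆ ℝ^d be relatively separated and t > d. Then for all x ∈ ℝ^d, ∑_{γ ∈ Γ} (1+|γ|)^{-t}(1+|x-γ|)^{-t} ≤ K·rel(Γ)·(1+|x|)^{-t} for a constant K depending only on t and d. -/
/-!
Since `|x| ≤ |γ| + |x - γ|`, the larger of `|γ|` and `|x - γ|` is at least `|x| / 2`, so each
product `(1+|γ|)^{-t} (1+|x-γ|)^{-t}` is at most `2^t (1+|x|)^{-t}` times the sum of the two
factors. It therefore suffices to bound `∑_{γ ∈ Γ} (1+|z-γ|)^{-t}` by `C · rel(Γ)` uniformly in `z`.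
Sort the points of `Γ` into the cubes `z + n + [0,1)^d`, `n ∈ ℤ^d`, each of which holds at most
`rel(Γ)` of them; on the cube of index `n` the weight is at most `2^t ∏ᵢ (1+|nᵢ|)^{-p}` for any
`p ≤ t/d`, and for `p > 1` the sum of this over `ℤ^d` is the `d`-th power of a convergent series.
-/

open Finset

lemma exists_one_lt_and_mul_le {d : ℕ} {t : ℝ} (ht : (d : ℝ) < t) :
    ∃ p : ℝ, 1 < p ∧ d * p ≤ t := by
  rcases d.eq_zero_or_pos with rfl | hd
  · exact ⟨2, one_lt_two, by simpa using ht.le⟩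
  · have hd' : (0 : ℝ) < d := Nat.cast_pos.mpr hd
    exact ⟨t / d, (one_lt_div hd').mpr ht, (mul_div_cancel₀ t hd'.ne').le⟩

lemma one_add_rpow_neg_mul_le {a b c t : ℝ} (ht : 0 ≤ t) (ha : 0 ≤ a) (hb : 0 ≤ b) (hc : 0 ≤ c)
    (habc : c ≤ a + b) :
    (1 + a) ^ (-t) * (1 + b) ^ (-t) ≤
      2 ^ t * (1 + c) ^ (-t) * ((1 + a) ^ (-t) + (1 + b) ^ (-t)) := by
  wlog hba : b ≤ a generalizing a b
  · rw [mul_comm ((1 + a) ^ (-t)), add_comm ((1 + a) ^ (-t))]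
    exact this hb ha (by linarith) (le_of_not_ge hba)
  have hlarge : (1 + a) ^ (-t) ≤ 2 ^ t * (1 + c) ^ (-t) :=
    calc (1 + a) ^ (-t) ≤ ((1 + c) / 2) ^ (-t) :=
          Real.rpow_le_rpow_of_nonpos (by positivity) (by linarith) (by linarith)
      _ = 2 ^ t * (1 + c) ^ (-t) := by
          rw [Real.div_rpow (by positivity) zero_le_two, Real.rpow_neg zero_le_two, div_inv_eq_mul,
            mul_comm]
  calc (1 + a) ^ (-t) * (1 + b) ^ (-t) ≤ 2 ^ t * (1 + c) ^ (-t) * (1 + b) ^ (-t) := by gcongr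
    _ ≤ 2 ^ t * (1 + c) ^ (-t) * ((1 + a) ^ (-t) + (1 + b) ^ (-t)) := by
        gcongr
        exact le_add_of_nonneg_left (by positivity)

lemma sum_one_add_norm_rpow_neg_mul_le {ι E : Type*} [SeminormedAddCommGroup E] {t : ℝ}
    (ht : 0 ≤ t) (x : E) (s : Finset ι) (v : ι → E) :
    ∑ i ∈ s, (1 + ‖v i‖) ^ (-t) * (1 + ‖x - v i‖) ^ (-t) ≤
      2 ^ t * (1 + ‖x‖) ^ (-t) * ∑ i ∈ s, ((1 + ‖v i‖) ^ (-t) + (1 + ‖x - v i‖) ^ (-t)) := by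
  rw [mul_sum]
  exact sum_le_sum fun i _ => one_add_rpow_neg_mul_le ht (norm_nonneg _) (norm_nonneg _)
    (norm_nonneg _) (by simpa using norm_add_le (v i) (x - v i))

lemma summable_one_add_abs_int_rpow_neg {p : ℝ} (hp : 1 < p) :
    Summable fun m : ℤ => (1 + |(m : ℝ)|) ^ (-p) := by
  have hnat : Summable fun n : ℕ => (1 + (n : ℝ)) ^ (-p) := by
    refine ((Real.summable_one_div_nat_add_rpow 1 p).mpr hp).congr fun n => ?_
    rw [Real.rpow_neg (by positivity), abs_of_nonneg (by positivity), add_comm, one_div]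
  exact summable_int_iff_summable_nat_and_neg.mpr
    ⟨hnat.congr fun n => by simp, hnat.congr fun n => by simp⟩

lemma sum_prod_one_add_abs_rpow_neg_le {ι : Type*} [Fintype ι] [DecidableEq ι] {p : ℝ}
    (hp : 1 < p) (T : Finset (ι → ℤ)) :
    ∑ n ∈ T, ∏ i, (1 + |(n i : ℝ)|) ^ (-p) ≤
      (∑' m : ℤ, (1 + |(m : ℝ)|) ^ (-p)) ^ Fintype.card ι :=
  calc ∑ n ∈ T, ∏ i, (1 + |(n i : ℝ)|) ^ (-p)
      ≤ ∑ n ∈ Fintype.piFinset fun i => (T.image fun n => n i : Finset ℤ),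
          ∏ i, (1 + |(n i : ℝ)|) ^ (-p) :=
        sum_le_sum_of_subset_of_nonneg
          (fun n hn => Fintype.mem_piFinset.mpr fun _ => mem_image_of_mem _ hn)
          (fun _ _ _ => by positivity)
    _ = ∏ i, ∑ m ∈ (T.image fun n => n i : Finset ℤ), (1 + |(m : ℝ)|) ^ (-p) :=
        (prod_univ_sum (fun i => T.image fun n => n i) fun _ (m : ℤ) => (1 + |(m : ℝ)|) ^ (-p)).symm
    _ ≤ ∏ _i : ι, ∑' m : ℤ, (1 + |(m : ℝ)|) ^ (-p) :=
        prod_le_prod (fun _ _ => by positivity) fun _ _ =>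
          (summable_one_add_abs_int_rpow_neg hp).sum_le_tsum _ fun _ _ => by positivity
    _ = _ := prod_const _

lemma sum_le_mul_sum_image_of_card_fiber_le {α β : Type*} [DecidableEq β] {s : Finset α}
    {ν : α → β} {f : α → ℝ} {g : β → ℝ} {R : ℕ} (hfiber : ∀ b, #{a ∈ s | ν a = b} ≤ R)
    (hg : ∀ b, 0 ≤ g b) (hfg : ∀ a ∈ s, f a ≤ g (ν a)) :
    ∑ a ∈ s, f a ≤ R * ∑ b ∈ s.image ν, g b := by
  rw [← sum_fiberwise_of_maps_to fun a ha => mem_image_of_mem ν ha, mul_sum]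
  refine sum_le_sum fun b _ => ?_
  calc ∑ a ∈ s with ν a = b, f a ≤ #{a ∈ s | ν a = b} • g b :=
        sum_le_card_nsmul _ _ _ fun a ha => (mem_filter.mp ha).2 ▸ hfg a (mem_filter.mp ha).1
    _ ≤ R * g b := by
        rw [nsmul_eq_mul]
        exact mul_le_mul_of_nonneg_right (Nat.cast_le.mpr (hfiber b)) (hg b)

lemma one_add_norm_rpow_neg_le_prod_floor {d : ℕ} {p t : ℝ} (hp : 0 ≤ p) (hpt : d * p ≤ t)
    (y : EuclideanSpace ℝ (Fin d)) :
    (1 + ‖y‖) ^ (-t) ≤ 2 ^ t * ∏ i, (1 + |(⌊y i⌋ : ℝ)|) ^ (-p) := by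
  have hcoord : ∀ i, 1 + |(⌊y i⌋ : ℝ)| ≤ 2 * (1 + ‖y‖) := fun i => by
    have hfloor : |(⌊y i⌋ : ℝ)| ≤ |y i| + 1 :=
      abs_le.mpr ⟨by linarith [neg_abs_le (y i), Int.sub_one_lt_floor (y i)],
        by linarith [le_abs_self (y i), Int.floor_le (y i)]⟩
    have hyi : |y i| ≤ ‖y‖ := (Real.norm_eq_abs _).symm.trans_le (PiLp.norm_apply_le y i)
    linarith [norm_nonneg y]
  calc (1 + ‖y‖) ^ (-t) = 2 ^ t * (2 * (1 + ‖y‖)) ^ (-t) := by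
        rw [Real.mul_rpow zero_le_two (by positivity), ← mul_assoc, ← Real.rpow_add two_pos,
          add_neg_cancel, Real.rpow_zero, one_mul]
    _ ≤ 2 ^ t * (2 * (1 + ‖y‖)) ^ (-(d * p)) := by
        refine mul_le_mul_of_nonneg_left ?_ (by positivity)
        exact Real.rpow_le_rpow_of_exponent_le (by linarith [norm_nonneg y]) (by linarith)
    _ = 2 ^ t * ∏ _i : Fin d, (2 * (1 + ‖y‖)) ^ (-p) := by
        rw [prod_const, card_univ, Fintype.card_fin, ← Real.rpow_natCast, ← Real.rpow_mul
          (by positivity)]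
        ring_nf
    _ ≤ 2 ^ t * ∏ i, (1 + |(⌊y i⌋ : ℝ)|) ^ (-p) := by
        refine mul_le_mul_of_nonneg_left (prod_le_prod (fun _ _ => by positivity) fun i _ => ?_)
          (by positivity)
        exact Real.rpow_le_rpow_of_nonpos (by positivity) (hcoord i) (by linarith)

lemma card_filter_floor_sub_eq_le {d : ℕ} {Γ : Set (EuclideanSpace ℝ (Fin d))} {R : ℕ}
    (hfin : ∀ x : EuclideanSpace ℝ (Fin d),
      (Γ ∩ {y | ∀ i, y i - x i ∈ Set.Icc (0:ℝ) 1}).Finite)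
    (hcount : ∀ x : EuclideanSpace ℝ (Fin d),
      (Γ ∩ {y | ∀ i, y i - x i ∈ Set.Icc (0:ℝ) 1}).ncard ≤ R)
    (z : EuclideanSpace ℝ (Fin d)) (F : Finset Γ) (n : Fin d → ℤ) :
    #(F.filter fun γ : Γ => (fun i => ⌊((γ : EuclideanSpace ℝ (Fin d)) - z) i⌋) = n) ≤ R := by
  set x₀ : EuclideanSpace ℝ (Fin d) := z + WithLp.toLp 2 fun i => (n i : ℝ)
  set G := F.filter fun γ : Γ => (fun i => ⌊((γ : EuclideanSpace ℝ (Fin d)) - z) i⌋) = n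
  have hcube : (G.map (Function.Embedding.subtype _) : Set (EuclideanSpace ℝ (Fin d))) ⊆
      Γ ∩ {y | ∀ i, y i - x₀ i ∈ Set.Icc (0:ℝ) 1} := by
    intro y hy
    obtain ⟨γ, hγ, rfl⟩ := Finset.mem_map.mp hy
    refine ⟨γ.2, fun i => ?_⟩
    have hfract : (γ : EuclideanSpace ℝ (Fin d)) i - x₀ i =
        Int.fract (((γ : EuclideanSpace ℝ (Fin d)) - z) i) := by
      rw [Int.fract, congrFun (mem_filter.mp hγ).2 i]
      simp only [x₀, PiLp.add_apply, PiLp.sub_apply]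
      ring
    rw [Function.Embedding.subtype_apply, hfract]
    exact ⟨Int.fract_nonneg _, (Int.fract_lt_one _).le⟩
  calc #G = #(G.map (Function.Embedding.subtype _)) := (card_map _).symm
    _ = (G.map (Function.Embedding.subtype _) : Set (EuclideanSpace ℝ (Fin d))).ncard :=
        (Set.ncard_coe_finset _).symm
    _ ≤ _ := Set.ncard_le_ncard hcube (hfin x₀)
    _ ≤ R := hcount x₀

lemma sum_one_add_norm_sub_rpow_neg_le {d : ℕ} {Γ : Set (EuclideanSpace ℝ (Fin d))} {R : ℕ}
    (hfin : ∀ x : EuclideanSpace ℝ (Fin d),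
      (Γ ∩ {y | ∀ i, y i - x i ∈ Set.Icc (0:ℝ) 1}).Finite)
    (hcount : ∀ x : EuclideanSpace ℝ (Fin d),
      (Γ ∩ {y | ∀ i, y i - x i ∈ Set.Icc (0:ℝ) 1}).ncard ≤ R)
    {p t : ℝ} (hp : 1 < p) (hpt : d * p ≤ t) (z : EuclideanSpace ℝ (Fin d)) (F : Finset Γ) :
    ∑ γ ∈ F, (1 + ‖z - (γ : EuclideanSpace ℝ (Fin d))‖) ^ (-t) ≤
      R * (2 ^ t * (∑' m : ℤ, (1 + |(m : ℝ)|) ^ (-p)) ^ d) := by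
  calc ∑ γ ∈ F, (1 + ‖z - (γ : EuclideanSpace ℝ (Fin d))‖) ^ (-t)
      ≤ R * ∑ n ∈ F.image fun γ : Γ => (fun i => ⌊((γ : EuclideanSpace ℝ (Fin d)) - z) i⌋),
          2 ^ t * ∏ i, (1 + |(n i : ℝ)|) ^ (-p) :=
        sum_le_mul_sum_image_of_card_fiber_le (card_filter_floor_sub_eq_le hfin hcount z F)
          (fun _ => by positivity) fun γ _ => by
            rw [norm_sub_rev]
            exact one_add_norm_rpow_neg_le_prod_floor (by linarith) hpt _
    _ ≤ R * (2 ^ t * (∑' m : ℤ, (1 + |(m : ℝ)|) ^ (-p)) ^ d) := by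
        rw [← mul_sum]
        gcongr
        simpa using sum_prod_one_add_abs_rpow_neg_le (ι := Fin d) hp _

/-- Discrete subconvolutivity: for `Γ ⊆ ℝ^d` relatively separated with `rel(Γ) ≤ R`
and `t > d`, `∑_{γ∈Γ} (1+|γ|)^{-t}(1+|x-γ|)^{-t} ≤ K·R·(1+|x|)^{-t}` with `K = K(t,d)`. -/
theorem sum_polynomial_weight_subconvolutive (d : ℕ) (t : ℝ) (ht : (d : ℝ) < t) :
    ∃ K > (0 : ℝ), ∀ (Γ : Set (EuclideanSpace ℝ (Fin d))) (R : ℕ),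
      (∀ x : EuclideanSpace ℝ (Fin d),
        (Γ ∩ {y | ∀ i, y i - x i ∈ Set.Icc (0:ℝ) 1}).Finite) →
      (∀ x : EuclideanSpace ℝ (Fin d),
        (Γ ∩ {y | ∀ i, y i - x i ∈ Set.Icc (0:ℝ) 1}).ncard ≤ R) →
      ∀ x : EuclideanSpace ℝ (Fin d),
        ∑' γ : Γ, (1 + ‖(γ : EuclideanSpace ℝ (Fin d))‖) ^ (-t) *
            (1 + ‖x - (γ : EuclideanSpace ℝ (Fin d))‖) ^ (-t)
          ≤ K * R * (1 + ‖x‖) ^ (-t) := by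
  obtain ⟨p, hp, hpt⟩ := exists_one_lt_and_mul_le ht
  have ht0 : 0 ≤ t := le_trans (by positivity) hpt
  set C := 2 ^ t * (∑' m : ℤ, (1 + |(m : ℝ)|) ^ (-p)) ^ d
  have hC : 0 < C := by
    have := (summable_one_add_abs_int_rpow_neg hp).tsum_pos (fun _ => by positivity) 0
      (by positivity)
    positivity
  refine ⟨2 ^ (t + 1) * C, by positivity, fun Γ R hfin hcount x =>
    tsum_le_of_sum_le' (by positivity) fun s => ?_⟩
  have hsum₀ := sum_one_add_norm_sub_rpow_neg_le hfin hcount hp hpt 0 s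
  have hsumₓ := sum_one_add_norm_sub_rpow_neg_le hfin hcount hp hpt x s
  simp only [zero_sub, norm_neg] at hsum₀
  refine (sum_one_add_norm_rpow_neg_mul_le ht0 x s Subtype.val).trans ?_
  rw [sum_add_distrib]
  calc _ ≤ 2 ^ t * (1 + ‖x‖) ^ (-t) * (R * C + R * C) := by gcongr
    _ = 2 ^ (t + 1) * C * R * (1 + ‖x‖) ^ (-t) := by
        rw [Real.rpow_add_one two_ne_zero]
        ring
end
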